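/- Let y_i = θ_i + √(v_0) ε_i for i = 1,...,n with v_0 > 0, θ ∈ R^n, and ε ∈ R^n, let σ be a bijection of {1,...,n}, let m := ⌊n/2⌋ − 1 ≥ 1, and define v̂ := (1/(2m)) Σ_{i=1}^{m} (y_{σ(2i)} − y_{σ(2i−1)})². Then, deterministically, |v_0 − v̂| ≤ v_0 · | 1 − (1/(2m)) Σ_{i=1}^{m} (ε_{σ(2i)} − ε_{σ(2i−1)})² | + ( (4 ‖ε‖_∞ √(v_0) + 2 ‖θ‖_∞) / (2m) ) · Σ_{i=1}^{n−1} |θ_{σ(i)} − θ_{σ(i+1)}|. -/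
import Mathlib


/-- deterministic bound for the differences-based variance estimator. With
`y_i = θ_i + √(v_0) ε_i`, `σ` a bijection of `{1,...,n}`, `m := ⌊n/2⌋ − 1 ≥ 1` and
`v̂ := (1/(2m)) Σ_{i=1}^m (y_{σ(2i)} − y_{σ(2i−1)})²`, one has
`|v_0 − v̂| ≤ v_0 |1 − (1/(2m)) Σ (ε_{σ(2i)} − ε_{σ(2i−1)})²|
  + ((4‖ε‖_∞ √v_0 + 2‖θ‖_∞)/(2m)) Σ_{i=1}^{n−1} |θ_{σ(i)} − θ_{σ(i+1)}|`.
(0-indexed pairs `(σ(2i), σ(2i+1))`, `i = 0,...,m−1`.) -/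
theorem deterministic_variance_estimator_bound {n : ℕ}
    (θ ε : Fin n → ℝ) (v0 : ℝ) (hv0 : 0 < v0)
    (y : Fin n → ℝ) (hy : ∀ i, y i = θ i + Real.sqrt v0 * ε i)
    (σ : Equiv.Perm (Fin n)) (hm : 1 ≤ n / 2 - 1)
    (vhat : ℝ)
    (hvhat : vhat = (1 / (2 * ((n / 2 - 1 : ℕ) : ℝ))) * ∑ i : Fin (n / 2 - 1),
        (y (σ ⟨2 * i.val + 1, by have := i.isLt; omega⟩)
          - y (σ ⟨2 * i.val, by have := i.isLt; omega⟩)) ^ 2) :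
    |v0 - vhat| ≤
      v0 * |1 - (1 / (2 * ((n / 2 - 1 : ℕ) : ℝ))) * ∑ i : Fin (n / 2 - 1),
          (ε (σ ⟨2 * i.val + 1, by have := i.isLt; omega⟩)
            - ε (σ ⟨2 * i.val, by have := i.isLt; omega⟩)) ^ 2|
      + ((4 * (⨆ i, |ε i|) * Real.sqrt v0 + 2 * ⨆ i, |θ i|) / (2 * ((n / 2 - 1 : ℕ) : ℝ))) *
          ∑ i : Fin (n - 1), |θ (σ ⟨i.val, by have := i.isLt; omega⟩)
            - θ (σ ⟨i.val + 1, by have := i.isLt; omega⟩)| := by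
  have hn4 : 4 ≤ n := by omega
  set m : ℕ := n / 2 - 1 with hmdef
  have hm1 : (1:ℝ) ≤ (m:ℝ) := by exact_mod_cast hm
  have hMpos : (0:ℝ) < 2 * (m:ℝ) := by linarith
  have hs : Real.sqrt v0 ^ 2 = v0 := Real.sq_sqrt hv0.le
  set c : ℝ := 1 / (2 * (m:ℝ)) with hc
  have hcpos : 0 < c := by positivity
  have hidx1 : ∀ i : Fin m, 2 * i.val + 1 < n := fun i => by have := i.isLt; omega
  have hidx0 : ∀ i : Fin m, 2 * i.val < n := fun i => by have := i.isLt; omega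
  set A : Fin m → ℝ := fun i =>
    ε (σ ⟨2*i.val+1, hidx1 i⟩) - ε (σ ⟨2*i.val, hidx0 i⟩) with hA
  set B : Fin m → ℝ := fun i =>
    θ (σ ⟨2*i.val+1, hidx1 i⟩) - θ (σ ⟨2*i.val, hidx0 i⟩) with hB
  set Eε : ℝ := ⨆ i, |ε i| with hEe
  set Eθ : ℝ := ⨆ i, |θ i| with hEt
  have hne : Nonempty (Fin n) := ⟨⟨0, by omega⟩⟩
  have hεle : ∀ j, |ε j| ≤ Eε := fun j => by
    rw [hEe]; exact le_ciSup (f := fun i => |ε i|) (Set.Finite.bddAbove (Set.finite_range _)) j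
  have hθle : ∀ j, |θ j| ≤ Eθ := fun j => by
    rw [hEt]; exact le_ciSup (f := fun i => |θ i|) (Set.Finite.bddAbove (Set.finite_range _)) j
  set C : ℝ := 4 * Eε * Real.sqrt v0 + 2 * Eθ with hC
  -- rewrite vhat
  have hvh : vhat = c * ∑ i : Fin m, (B i + Real.sqrt v0 * A i)^2 := by
    rw [hvhat]
    congr 1
    apply Finset.sum_congr rfl
    intro i _
    rw [hy, hy]
    show (θ (σ ⟨2*i.val+1, hidx1 i⟩) + Real.sqrt v0 * ε (σ ⟨2*i.val+1, hidx1 i⟩)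
      - (θ (σ ⟨2*i.val, hidx0 i⟩) + Real.sqrt v0 * ε (σ ⟨2*i.val, hidx0 i⟩)))^2
      = (B i + Real.sqrt v0 * A i)^2
    rw [hA, hB]; ring
  have key : v0 - vhat = v0 * (1 - c * ∑ i, A i ^ 2)
      - c * ∑ i, B i * (2 * Real.sqrt v0 * A i + B i) := by
    rw [hvh]
    have h1 : ∑ i : Fin m, (B i + Real.sqrt v0 * A i)^2
        = v0 * ∑ i, A i ^ 2 + ∑ i, B i * (2 * Real.sqrt v0 * A i + B i) := by
      rw [Finset.mul_sum, ← Finset.sum_add_distrib]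
      apply Finset.sum_congr rfl
      intro i _
      calc (B i + Real.sqrt v0 * A i)^2
          = Real.sqrt v0 ^ 2 * A i ^ 2 + B i * (2 * Real.sqrt v0 * A i + B i) := by ring
        _ = v0 * A i ^ 2 + B i * (2 * Real.sqrt v0 * A i + B i) := by rw [hs]
    rw [h1]; ring
  have tri : |v0 - vhat| ≤ v0 * |1 - c * ∑ i, A i ^ 2|
      + c * |∑ i, B i * (2 * Real.sqrt v0 * A i + B i)| := by
    rw [key, sub_eq_add_neg]
    refine (abs_add_le _ _).trans ?_
    rw [abs_neg, abs_mul, abs_mul, abs_of_pos hv0, abs_of_pos hcpos]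
  -- bound the cross sum
  have hAle : ∀ i, |A i| ≤ 2 * Eε := fun i => by
    have h1 := hεle (σ ⟨2*i.val+1, hidx1 i⟩)
    have h2 := hεle (σ ⟨2*i.val, hidx0 i⟩)
    have := abs_sub (ε (σ ⟨2*i.val+1, hidx1 i⟩)) (ε (σ ⟨2*i.val, hidx0 i⟩))
    rw [hA]; dsimp only; linarith
  have hBle : ∀ i, |B i| ≤ 2 * Eθ := fun i => by
    have h1 := hθle (σ ⟨2*i.val+1, hidx1 i⟩)
    have h2 := hθle (σ ⟨2*i.val, hidx0 i⟩)
    have := abs_sub (θ (σ ⟨2*i.val+1, hidx1 i⟩)) (θ (σ ⟨2*i.val, hidx0 i⟩))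
    rw [hB]; dsimp only; linarith
  have hEε0 : 0 ≤ Eε := le_trans (abs_nonneg _) (hεle ⟨0, by omega⟩)
  have hsqrt0 : 0 ≤ Real.sqrt v0 := Real.sqrt_nonneg _
  have hsum1 : |∑ i, B i * (2 * Real.sqrt v0 * A i + B i)| ≤ C * ∑ i, |B i| := by
    refine (Finset.abs_sum_le_sum_abs _ _).trans ?_
    rw [Finset.mul_sum]
    apply Finset.sum_le_sum
    intro i _
    rw [abs_mul, mul_comm C]
    apply mul_le_mul_of_nonneg_left _ (abs_nonneg _)
    refine (abs_add_le _ _).trans ?_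
    have h1 : |2 * Real.sqrt v0 * A i| ≤ 2 * Real.sqrt v0 * (2 * Eε) := by
      rw [abs_mul, abs_of_nonneg (by positivity : (0:ℝ) ≤ 2 * Real.sqrt v0)]
      exact mul_le_mul_of_nonneg_left (hAle i) (by positivity)
    have h2 := hBle i
    rw [hC]; linarith
  -- embed the pair-sum into the full consecutive-differences sum
  have hidxf : ∀ i : Fin m, 2 * i.val < n - 1 := fun i => by have := i.isLt; omega
  set T : Fin (n-1) → ℝ := fun j =>
    |θ (σ ⟨j.val, by have := j.isLt; omega⟩) - θ (σ ⟨j.val + 1, by have := j.isLt; omega⟩)| with hT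
  have hsum2 : ∑ i, |B i| ≤ ∑ j : Fin (n-1), T j := by
    have hinj : Function.Injective (fun i : Fin m => (⟨2*i.val, hidxf i⟩ : Fin (n-1))) := by
      intro a b h
      have := Fin.mk.injEq (2*a.val) (hidxf a) (2*b.val) (hidxf b) ▸ h
      have h2 : 2*a.val = 2*b.val := by simpa [Fin.ext_iff] using h
      exact Fin.ext (by omega)
    calc ∑ i, |B i| = ∑ i : Fin m, T ⟨2*i.val, hidxf i⟩ := by
          apply Finset.sum_congr rfl
          intro i _
          rw [hB, hT]
          exact (abs_sub_comm _ _)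
      _ = ∑ j ∈ Finset.univ.image (fun i : Fin m => (⟨2*i.val, hidxf i⟩ : Fin (n-1))), T j := by
          rw [Finset.sum_image (fun a _ b _ h => hinj h)]
      _ ≤ ∑ j : Fin (n-1), T j := Finset.sum_le_sum_of_subset_of_nonneg
          (Finset.subset_univ _) (fun _ _ _ => abs_nonneg _)
  have hC0 : 0 ≤ C := by
    have h0 := le_trans (abs_nonneg _) (hθle ⟨0, by omega⟩)
    rw [hC]; positivity
  -- assemble
  have final : c * |∑ i, B i * (2 * Real.sqrt v0 * A i + B i)| ≤ (C / (2*(m:ℝ))) * ∑ j : Fin (n-1), T j := by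
    have : (C / (2*(m:ℝ))) = c * C := by rw [hc]; ring
    rw [this, mul_assoc]
    apply mul_le_mul_of_nonneg_left _ hcpos.le
    exact hsum1.trans (mul_le_mul_of_nonneg_left hsum2 hC0)
  exact tri.trans (by linarith)
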